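/- Horizontal strip containing all zeros (Equations (3.46) and (3.48)). For all x ∈ ℝ and all y ∈ ℝ with y ≠ 0, one has |∫₀^{2π} e^{i(x+iy)t} K(t) dt| ≤ ‖K‖_{L²(0,2π)} · ((1 − e^{−4πy}) / (2y))^{1/2} and |1 − e^{2πi(x+iy)}| ≥ |1 − e^{−2πy}|. Consequently, there exists b₀ > 0 depending only on ‖K‖_{L²(0,2π)} such that every zero λ of Φ satisfies |Im λ| < b₀. -/

import Mathlib

open MeasureTheory Real Complex

/-- `Φ(λ) = 1 − e^{2πiλ} + i ∫₀^{2π} e^{iλt} K(t) dt`. -/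
noncomputable def Phi (K : ℝ → ℂ) (lam : ℂ) : ℂ :=
  1 - Complex.exp (2 * Real.pi * Complex.I * lam)
    + Complex.I * ∫ t in (0:ℝ)..(2 * Real.pi), Complex.exp (Complex.I * lam * t) * K t

/-!
If `Φ(λ) = 0` then `|1 − e^{2πiλ}| = |∫₀^{2π} e^{iλt} K(t) dt|`. Writing `y = Im λ`, the left side
is at least `|1 − e^{−2πy}|`, while Cauchy–Schwarz bounds the right side by
`‖K‖₂ ((1 − e^{−4πy})/(2y))^{1/2}`. As `1 − e^{−4πy} = (1 − e^{−2πy})(1 + e^{−2πy})` and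
`1 − e^{−2πy}` has the sign of `y`, squaring gives `2y (1 − e^{−2πy}) ≤ ‖K‖₂² (1 + e^{−2πy})`,
i.e. `2y tanh(πy) ≤ ‖K‖₂²`, which forces `|y| ≤ ‖K‖₂²` as soon as `|y| ≥ 1`.
-/

theorem norm_integral_mul_le_sqrt_mul_sqrt {α 𝕜 : Type*} [MeasurableSpace α] {μ : Measure α}
    [RCLike 𝕜] {f g : α → 𝕜} (hf : MemLp f 2 μ) (hg : MemLp g 2 μ) :
    ‖∫ a, f a * g a ∂μ‖ ≤ √(∫ a, ‖f a‖ ^ 2 ∂μ) * √(∫ a, ‖g a‖ ^ 2 ∂μ) := by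
  refine (norm_integral_le_integral_norm _).trans ?_
  have hHolder := integral_mul_norm_le_Lp_mul_Lq Real.HolderConjugate.two_two
    (by simpa using hf) (by simpa using hg)
  simpa only [norm_mul, Real.rpow_two, Real.sqrt_eq_rpow] using hHolder

theorem norm_intervalIntegral_mul_le_sqrt_mul_sqrt {𝕜 : Type*} [RCLike 𝕜] {f g : ℝ → 𝕜}
    {a b : ℝ} (hab : a ≤ b) (hf : MemLp f 2 (volume.restrict (Set.Ioo a b)))
    (hg : MemLp g 2 (volume.restrict (Set.Ioo a b))) :
    ‖∫ t in a..b, f t * g t‖ ≤ √(∫ t in a..b, ‖f t‖ ^ 2) * √(∫ t in a..b, ‖g t‖ ^ 2) := by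
  simp only [intervalIntegral.integral_of_le hab, integral_Ioc_eq_integral_Ioo]
  exact norm_integral_mul_le_sqrt_mul_sqrt hf hg

theorem Continuous.memLp_restrict_Ioo {E : Type*} [NormedAddCommGroup E] {f : ℝ → E}
    (hf : Continuous f) (p : ENNReal) (a b : ℝ) : MemLp f p (volume.restrict (Set.Ioo a b)) := by
  obtain ⟨C, hC⟩ := (isCompact_Icc (a := a) (b := b)).exists_bound_of_continuousOn hf.continuousOn
  refine MemLp.of_bound hf.aestronglyMeasurable C ?_
  filter_upwards [ae_restrict_mem measurableSet_Ioo] with t ht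
  exact hC t (Set.Ioo_subset_Icc_self ht)

theorem integral_exp_mul {c : ℝ} (hc : c ≠ 0) (a b : ℝ) :
    ∫ t in a..b, Real.exp (c * t) = (Real.exp (c * b) - Real.exp (c * a)) / c := by
  rw [intervalIntegral.integral_comp_mul_left (fun s => Real.exp s) hc, integral_exp,
    smul_eq_mul, inv_mul_eq_div]

theorem norm_cexp_I_mul_mul (x y t : ℝ) :
    ‖Complex.exp (Complex.I * (x + Complex.I * y) * t)‖ = Real.exp (-(y * t)) := by
  rw [Complex.norm_exp]
  congr 1
  simp

theorem norm_integral_cexp_mul_le (K : ℝ → ℂ)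
    (hK : MemLp K 2 (volume.restrict (Set.Ioo 0 (2 * π)))) (x : ℝ) {y : ℝ} (hy : y ≠ 0) :
    ‖∫ t in (0:ℝ)..(2 * π), Complex.exp (Complex.I * (x + Complex.I * y) * t) * K t‖
      ≤ √(∫ t in (0:ℝ)..(2 * π), ‖K t‖ ^ 2) * √((1 - Real.exp (-(4 * π * y))) / (2 * y)) := by
  have hexp : Continuous fun t : ℝ => Complex.exp (Complex.I * (x + Complex.I * y) * t) := by
    fun_prop
  have hsq : ∫ t in (0:ℝ)..(2 * π), ‖Complex.exp (Complex.I * (x + Complex.I * y) * t)‖ ^ 2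
      = (1 - Real.exp (-(4 * π * y))) / (2 * y) := by
    calc _ = ∫ t in (0:ℝ)..(2 * π), Real.exp (-(2 * y) * t) := by
          simp_rw [norm_cexp_I_mul_mul, ← Real.exp_nat_mul]; ring_nf
      _ = _ := by
          rw [integral_exp_mul (by simpa using hy), mul_zero, Real.exp_zero]
          field_simp
          ring_nf
  rw [← hsq]
  exact (norm_intervalIntegral_mul_le_sqrt_mul_sqrt Real.two_pi_pos.le
    (hexp.memLp_restrict_Ioo 2 0 (2 * π)) hK).trans_eq (mul_comm _ _)

theorem abs_one_sub_exp_le_norm_one_sub_cexp (x y : ℝ) :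
    |1 - Real.exp (-(2 * π * y))|
      ≤ ‖1 - Complex.exp (2 * π * Complex.I * (x + Complex.I * y))‖ := by
  simpa [Complex.norm_exp] using
    abs_norm_sub_norm_le 1 (Complex.exp (2 * π * Complex.I * (x + Complex.I * y)))

theorem norm_one_sub_cexp_eq_of_Phi_eq_zero {K : ℝ → ℂ} {lam : ℂ} (h : Phi K lam = 0) :
    ‖1 - Complex.exp (2 * π * Complex.I * lam)‖
      = ‖∫ t in (0:ℝ)..(2 * π), Complex.exp (Complex.I * lam * t) * K t‖ := by
  rw [show 1 - Complex.exp (2 * π * Complex.I * lam)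
      = -(Complex.I * ∫ t in (0:ℝ)..(2 * π), Complex.exp (Complex.I * lam * t) * K t) by
    unfold Phi at h; linear_combination h]
  simp

theorem mul_one_sub_exp_neg_mul_pos {y : ℝ} (hy : y ≠ 0) {c : ℝ} (hc : 0 < c) :
    0 < y * (1 - Real.exp (-(c * y))) := by
  rcases hy.lt_or_gt with hneg | hpos
  · have : 1 < Real.exp (-(c * y)) := Real.one_lt_exp_iff.2 (by nlinarith)
    nlinarith
  · have : Real.exp (-(c * y)) < 1 := Real.exp_lt_one_iff.2 (by nlinarith)
    nlinarith

theorem two_mul_mul_one_sub_le_of_abs_le_sqrt_mul_sqrt {y e A : ℝ} (hpos : 0 < y * (1 - e))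
    (hA : 0 ≤ A) (h : |1 - e| ≤ √A * √((1 - e ^ 2) / (2 * y))) : 2 * y * (1 - e) ≤ A * (1 + e) := by
  have hy : y ≠ 0 := by rintro rfl; simp at hpos
  have he : 1 - e ≠ 0 := by rintro h; simp [h] at hpos
  have hq : 0 < (1 - e) / (2 * y) := by
    rw [show (1 - e) / (2 * y) = y * (1 - e) / (2 * y ^ 2) by field_simp]
    positivity
  rw [← Real.sqrt_mul hA, Real.le_sqrt' (abs_pos.2 he), sq_abs] at h
  refine le_of_mul_le_mul_right ?_ hq
  calc 2 * y * (1 - e) * ((1 - e) / (2 * y)) = (1 - e) ^ 2 := by field_simp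
    _ ≤ A * ((1 - e ^ 2) / (2 * y)) := h
    _ = A * (1 + e) * ((1 - e) / (2 * y)) := by ring

theorem abs_lt_of_two_mul_mul_one_sub_exp_le {y A : ℝ} (hA : 0 ≤ A)
    (h : 2 * y * (1 - Real.exp (-(2 * π * y))) ≤ A * (1 + Real.exp (-(2 * π * y)))) :
    |y| < A + 1 := by
  have three_le_exp : ∀ s : ℝ, 1 ≤ s → 3 ≤ Real.exp (2 * π * s) := fun s hs => by
    nlinarith [Real.add_one_le_exp (2 * π * s), Real.pi_gt_three]
  rcases le_or_gt 1 y with hy | hy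
  · have hE := three_le_exp y hy
    have hinv : Real.exp (-(2 * π * y)) * Real.exp (2 * π * y) = 1 := by
      rw [← Real.exp_add]; simp
    nlinarith [Real.exp_pos (-(2 * π * y)), abs_of_pos (by linarith : 0 < y)]
  rcases le_or_gt y (-1) with hy' | hy'
  · have hE := three_le_exp (-y) (by linarith)
    rw [mul_neg] at hE
    nlinarith [abs_of_neg (by linarith : y < 0)]
  · rw [abs_lt]; constructor <;> linarith

theorem exists_abs_im_lt_of_Phi_eq_zero {K : ℝ → ℂ}
    (hK : MemLp K 2 (volume.restrict (Set.Ioo 0 (2 * π)))) :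
    ∃ b₀ : ℝ, 0 < b₀ ∧ ∀ lam : ℂ, Phi K lam = 0 → |lam.im| < b₀ := by
  set A := ∫ t in (0:ℝ)..(2 * π), ‖K t‖ ^ 2
  have hA : 0 ≤ A := intervalIntegral.integral_nonneg Real.two_pi_pos.le fun t _ => by positivity
  refine ⟨A + 1, by linarith, fun lam h => ?_⟩
  rcases eq_or_ne lam.im 0 with hy | hy
  · rw [hy, abs_zero]; linarith
  have hlam : (lam.re : ℂ) + Complex.I * lam.im = lam := by rw [mul_comm, re_add_im]
  have hint := norm_integral_cexp_mul_le K hK lam.re hy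
  have hexp := abs_one_sub_exp_le_norm_one_sub_cexp lam.re lam.im
  rw [hlam] at hint hexp
  have hbound := hexp.trans ((norm_one_sub_cexp_eq_of_Phi_eq_zero h).trans_le hint)
  rw [show Real.exp (-(4 * π * lam.im)) = Real.exp (-(2 * π * lam.im)) ^ 2 by
    rw [← Real.exp_nat_mul]; ring_nf] at hbound
  exact abs_lt_of_two_mul_mul_one_sub_exp_le hA
    (two_mul_mul_one_sub_le_of_abs_le_sqrt_mul_sqrt
      (mul_one_sub_exp_neg_mul_pos hy Real.two_pi_pos) hA hbound)

/-- Horizontal strip containing all zeros (Equations (3.46) and (3.48)): for `y ≠ 0`,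
`|∫₀^{2π} e^{i(x+iy)t} K(t) dt| ≤ ‖K‖₂ √((1 − e^{−4πy})/(2y))` and
`|1 − e^{2πi(x+iy)}| ≥ |1 − e^{−2πy}|`; consequently all zeros of `Φ` lie in a horizontal
strip `|Im λ| < b₀`. -/
theorem zeros_in_horizontal_strip
    (K : ℝ → ℂ)
    (hK : MeasureTheory.MemLp K 2 (MeasureTheory.volume.restrict (Set.Ioo 0 (2 * Real.pi)))) :
    (∀ x y : ℝ, y ≠ 0 →
      ‖∫ t in (0:ℝ)..(2 * Real.pi),
          Complex.exp (Complex.I * (x + Complex.I * y) * t) * K t‖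
        ≤ Real.sqrt (∫ t in (0:ℝ)..(2 * Real.pi), ‖K t‖ ^ 2) *
            Real.sqrt ((1 - Real.exp (-(4 * Real.pi * y))) / (2 * y)) ∧
      ‖1 - Complex.exp (2 * Real.pi * Complex.I * (x + Complex.I * y))‖
        ≥ |1 - Real.exp (-(2 * Real.pi * y))|) ∧
    ∃ b₀ : ℝ, 0 < b₀ ∧ ∀ lam : ℂ, Phi K lam = 0 → |lam.im| < b₀ := by
  exact ⟨fun x y hy => ⟨norm_integral_cexp_mul_le K hK x hy,
    abs_one_sub_exp_le_norm_one_sub_cexp x y⟩, exists_abs_im_lt_of_Phi_eq_zero hK⟩
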